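/- Evaluation Contexts for Expressions (Lemma 4.5): if Γ ⊢ E[e] : t is derivable in the SID type system, where E is an evaluation context, then there are environments Γ₁, Γ₂ with Γ = Γ₁ + Γ₂ and a type s such that Γ₁, x : s ⊢ E[x] : t and Γ₂ ⊢ e : s are derivable (for a fresh variable x). -/
import Mathlib


set_option autoImplicit false

namespace SID

/-! ## Pre-types and pre-session types as coinductive trees -/

inductive TyLabel : Type
  | unit | endl | inp | out | shared | prod | arrow | lolli | io | delay
  deriving DecidableEq

def TyLabel.arity : TyLabel → ℕ
  | .unit => 0
  | .endl => 0
  | .inp => 2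
  | .out => 2
  | .shared => 1
  | .prod => 2
  | .arrow => 2
  | .lolli => 2
  | .io => 1
  | .delay => 1

def TyF : PFunctor := ⟨TyLabel, fun l => Fin l.arity⟩

/-- Pre-types: possibly infinite coinductively generated trees over the type constructors. -/
abbrev PreTy : Type := TyF.M

namespace PreTy

def label (t : PreTy) : TyLabel := (PFunctor.M.dest t).1

def childN (t : PreTy) (n : ℕ) : PreTy :=
  if h : n < t.label.arity then (PFunctor.M.dest t).2 ⟨n, h⟩ else t

def tyUnit : PreTy := PFunctor.M.mk ⟨TyLabel.unit, Fin.elim0⟩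
def tyEnd : PreTy := PFunctor.M.mk ⟨TyLabel.endl, Fin.elim0⟩
def mk1 (l : TyLabel) (t : PreTy) : PreTy := PFunctor.M.mk ⟨l, fun _ => t⟩
def mk2 (l : TyLabel) (t s : PreTy) : PreTy :=
  PFunctor.M.mk ⟨l, fun i => if i.val = 0 then t else s⟩
def tyShared (T : PreTy) : PreTy := mk1 .shared T
def tyIO (t : PreTy) : PreTy := mk1 .io t
def tyDelay (t : PreTy) : PreTy := mk1 .delay t
def tyInp (t T : PreTy) : PreTy := mk2 .inp t T
def tyOut (t T : PreTy) : PreTy := mk2 .out t T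
def tyProd (t s : PreTy) : PreTy := mk2 .prod t s
def tyArrow (t s : PreTy) : PreTy := mk2 .arrow t s
def tyLolli (t s : PreTy) : PreTy := mk2 .lolli t s
def tyDelayN (n : ℕ) (t : PreTy) : PreTy := tyDelay^[n] t

/-- The type •∞, the unique solution of •∞ = • •∞. -/
def tyBulletInf : PreTy := PFunctor.M.corec (fun _ : Unit => ⟨TyLabel.delay, fun _ => ()⟩) ()

/-- `Lin` is the least predicate singling out linear types. -/
inductive Lin : PreTy → Prop
  | inp {t : PreTy} : t.label = .inp → Lin t
  | out {t : PreTy} : t.label = .out → Lin t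
  | lolli {t : PreTy} : t.label = .lolli → Lin t
  | io {t : PreTy} : t.label = .io → Lin t
  | prodL {t : PreTy} : t.label = .prod → Lin (t.childN 0) → Lin t
  | prodR {t : PreTy} : t.label = .prod → Lin (t.childN 1) → Lin t
  | delay {t : PreTy} : t.label = .delay → Lin (t.childN 0) → Lin t

def Un (t : PreTy) : Prop := ¬ Lin t

/-- `Subtree s t` : `s` is a subtree of the tree representation of `t`. -/
inductive Subtree : PreTy → PreTy → Prop
  | refl (t : PreTy) : Subtree t t
  | child {s t : PreTy} (n : ℕ) : n < t.label.arity → Subtree s (t.childN n) → Subtree s t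

/-- Positions reachable from the root along session-continuation edges. -/
inductive SessPos : PreTy → PreTy → Prop
  | refl (t : PreTy) : SessPos t t
  | cont {t s : PreTy} : SessPos t s → (s.label = .inp ∨ s.label = .out) → SessPos t (s.childN 1)
  | delay {t s : PreTy} : SessPos t s → s.label = .delay → SessPos t (s.childN 0)

/-- A pre-type generated by the grammar of pre-session types. -/
def IsSession (T : PreTy) : Prop :=
  ∀ s, SessPos T s →
    s.label = .endl ∨ s.label = .inp ∨ s.label = .out ∨ s.label = .delay

/-- Infinite paths in the tree representation of a pre-type. -/
def InfPath (t : PreTy) (p : ℕ → PreTy) : Prop :=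
  p 0 = t ∧ ∀ n, ∃ k, k < (p n).label.arity ∧ p (n + 1) = (p n).childN k

/-- A pre-type is a type (Definition 3.1). -/
def IsTy (t : PreTy) : Prop :=
  {s | Subtree s t}.Finite ∧
  (∀ p, InfPath t p → ∀ n, ∃ m, n ≤ m ∧ (p m).label = .delay) ∧
  (∀ s, Subtree s t → s.label = .arrow → Un (s.childN 1) → Un (s.childN 0)) ∧
  (∀ s, Subtree s t → s.label = .lolli → Lin (s.childN 1))

/-- A pre-session type is a session type. -/
def IsSTy (T : PreTy) : Prop := IsTy T ∧ IsSession T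

/-- One step of the corecursive definition of duality. -/
def dualObj : PreTy ⊕ PreTy → TyF.Obj (PreTy ⊕ PreTy)
  | .inr t => ⟨t.label, fun i => .inr (t.childN i.val)⟩
  | .inl t =>
    match t.label with
    | .inp => ⟨TyLabel.out, fun i => if i.val = 0 then .inr (t.childN 0) else .inl (t.childN 1)⟩
    | .out => ⟨TyLabel.inp, fun i => if i.val = 0 then .inr (t.childN 0) else .inl (t.childN 1)⟩
    | .delay => ⟨TyLabel.delay, fun _ => .inl (t.childN 0)⟩
    | l => ⟨l, fun i => .inr (t.childN i.val)⟩

/-- The dual of a session type, coinductively swapping ? and !. -/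
def dualS (T : PreTy) : PreTy := PFunctor.M.corec dualObj (.inl T)

end PreTy

/-! ## Expressions -/

inductive Pol : Type
  | pos | neg
  deriving DecidableEq

def Pol.dual : Pol → Pol
  | .pos => .neg
  | .neg => .pos

inductive Const : Type
  | unit | pair | copen | send | recv | future | ret | bind
  deriving DecidableEq

inductive Expr : Type
  | const : Const → Expr
  | var : String → Expr
  | chan : String → Expr
  | ep : String → Pol → Expr
  | lam : String → Expr → Expr
  | app : Expr → Expr → Expr
  | split : Expr → String → String → Expr → Expr
  deriving DecidableEq

namespace Expr

def retE (e : Expr) : Expr := .app (.const .ret) e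
def pairE (e f : Expr) : Expr := .app (.app (.const .pair) e) f
def bindE (e f : Expr) : Expr := .app (.app (.const .bind) e) f
def sendE (a : String) (p : Pol) (e : Expr) : Expr := .app (.app (.const .send) (.ep a p)) e
def recvE (a : String) (p : Pol) : Expr := .app (.const .recv) (.ep a p)
def openE (a : String) : Expr := .app (.const .copen) (.chan a)
def futureE (e : Expr) : Expr := .app (.const .future) e

/-- Substitution of an expression for a variable. -/
def subst : Expr → String → Expr → Expr
  | .const k, _, _ => .const k
  | .var y, x, f => if y = x then f else .var y
  | .chan a, _, _ => .chan a
  | .ep a p, _, _ => .ep a p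
  | .lam y e, x, f => if y = x then .lam y e else .lam y (e.subst x f)
  | .app e₁ e₂, x, f => .app (e₁.subst x f) (e₂.subst x f)
  | .split e y z g, x, f =>
      .split (e.subst x f) y z (if y = x ∨ z = x then g else g.subst x f)

/-- Free variables. -/
def fv : Expr → Set String
  | .const _ => ∅
  | .var x => {x}
  | .chan _ => ∅
  | .ep _ _ => ∅
  | .lam x e => e.fv \ {x}
  | .app e f => e.fv ∪ f.fv
  | .split e x y f => e.fv ∪ (f.fv \ {x, y})

/-- Free channels (including the channels of endpoints). -/
def fc : Expr → Set String
  | .const _ => ∅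
  | .var _ => ∅
  | .chan a => {a}
  | .ep a _ => {a}
  | .lam _ e => e.fc
  | .app e f => e.fc ∪ f.fc
  | .split e _ _ f => e.fc ∪ f.fc

/-- Free (polarised) endpoints. -/
def feps : Expr → Set (String × Pol)
  | .const _ => ∅
  | .var _ => ∅
  | .chan _ => ∅
  | .ep a p => {(a, p)}
  | .lam _ e => e.feps
  | .app e f => e.feps ∪ f.feps
  | .split e _ _ f => e.feps ∪ f.feps

end Expr

/-- Evaluation contexts for expressions. -/
inductive ECtx : Type
  | hole : ECtx
  | appL : ECtx → Expr → ECtx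
  | splitC : ECtx → String → String → Expr → ECtx
  | openC : ECtx → ECtx
  | sendC : ECtx → ECtx
  | recvC : ECtx → ECtx
  | bindC : ECtx → ECtx

def ECtx.fill : ECtx → Expr → Expr
  | .hole, e => e
  | .appL E f, e => .app (E.fill e) f
  | .splitC E x y g, e => .split (E.fill e) x y g
  | .openC E, e => .app (.const .copen) (E.fill e)
  | .sendC E, e => .app (.const .send) (E.fill e)
  | .recvC E, e => .app (.const .recv) (E.fill e)
  | .bindC E, e => .app (.const .bind) (E.fill e)

def ECtx.feps : ECtx → Set (String × Pol)
  | .hole => ∅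
  | .appL E f => E.feps ∪ f.feps
  | .splitC E _ _ g => E.feps ∪ g.feps
  | .openC E => E.feps
  | .sendC E => E.feps
  | .recvC E => E.feps
  | .bindC E => E.feps

/-- Call-by-name reduction of expressions. -/
inductive EStep : Expr → Expr → Prop
  | beta {x : String} {e f : Expr} : EStep (.app (.lam x e) f) (e.subst x f)
  | bindRet {e f : Expr} : EStep (Expr.bindE (Expr.retE e) f) (.app f e)
  | splitPair {e₁ e₂ : Expr} {x y : String} {f : Expr} :
      EStep (.split (Expr.pairE e₁ e₂) x y f) ((f.subst x e₁).subst y e₂)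
  | ctx {e f : Expr} (E : ECtx) : EStep e f → EStep (E.fill e) (E.fill f)

/-- Multi-step reduction of expressions. -/
def EMulti : Expr → Expr → Prop := Relation.ReflTransGen EStep

/-- Normal forms. -/
def NormalE (e : Expr) : Prop := ∀ f, ¬ EStep e f

/-- Evaluation contexts for processes (monadic bind chains). -/
inductive PCtx : Type
  | hole : PCtx
  | bindC : PCtx → Expr → PCtx

def PCtx.fill : PCtx → Expr → Expr
  | .hole, e => e
  | .bindC C f, e => Expr.bindE (C.fill e) f

def PCtx.feps : PCtx → Set (String × Pol)
  | .hole => ∅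
  | .bindC C f => C.feps ∪ f.feps

end SID
namespace SID

/-! ## Names and environments -/

inductive Name : Type
  | var : String → Name
  | chan : String → Name
  | ep : String → Pol → Name
  deriving DecidableEq

/-- Bindable names: variables or channels. -/
inductive BName : Type
  | var : String → BName
  | chan : String → BName
  deriving DecidableEq

def BName.toName : BName → Name
  | .var x => .var x
  | .chan a => .chan a

def Expr.ofName : Name → Expr
  | .var x => .var x
  | .chan a => .chan a
  | .ep a p => .ep a p

/-- Number of free occurrences of a name in an expression. -/
def Expr.count (u : Name) : Expr → ℕ
  | .const _ => 0
  | .var x => if u = .var x then 1 else 0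
  | .chan a => if u = .chan a then 1 else 0
  | .ep a p => if u = .ep a p then 1 else 0
  | .lam x e => if u = .var x then 0 else e.count u
  | .app e f => e.count u + f.count u
  | .split e x y f => e.count u + (if u = .var x ∨ u = .var y then 0 else f.count u)

/-- Typing environments. -/
abbrev Env : Type := Name → Option PreTy

namespace Env

def upd (Γ : Env) (u : Name) (t : PreTy) : Env := fun v => if v = u then some t else Γ v

/-- `Γ₁ + Γ₂` is defined: shared assumptions agree and are unlimited. -/
def Compat (Γ₁ Γ₂ : Env) : Prop :=
  ∀ u t₁ t₂, Γ₁ u = some t₁ → Γ₂ u = some t₂ → t₁ = t₂ ∧ PreTy.Un t₁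

/-- The combination `Γ₁ + Γ₂` of environments. -/
def add (Γ₁ Γ₂ : Env) : Env := fun u =>
  match Γ₁ u with
  | some t => some t
  | none => Γ₂ u

end Env

/-- All types in the environment are unlimited. -/
def EnvUn (Γ : Env) : Prop := ∀ u t, Γ u = some t → PreTy.Un t

/-- The environment contains only shared channels. -/
def SharedOnly (Γ : Env) : Prop :=
  ∀ u t, Γ u = some t → (∃ a, u = Name.chan a) ∧ t.label = TyLabel.shared

/-- An environment is balanced if peer endpoints are given dual session types. -/
def Balanced (Γ : Env) : Prop :=
  ∀ a T S, Γ (.ep a .pos) = some T → Γ (.ep a .neg) = some S → T = PreTy.dualS S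

open PreTy in
/-- The type schemas `types(k)` of the constants. -/
inductive ConstTy : Const → PreTy → Prop
  | unit : ConstTy .unit tyUnit
  | ret {t : PreTy} : IsTy t → ConstTy .ret (tyArrow t (tyIO t))
  | copen {T : PreTy} : IsSTy T → ConstTy .copen (tyArrow (tyShared T) (tyIO T))
  | send {t T : PreTy} : IsTy t → IsSTy T →
      ConstTy .send (tyArrow (tyOut t T) (tyLolli t (tyIO T)))
  | recv {t T : PreTy} : IsTy t → IsSTy T →
      ConstTy .recv (tyArrow (tyInp t T) (tyIO (tyProd t T)))
  | future {n : ℕ} {t : PreTy} : IsTy t →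
      ConstTy .future (tyArrow (tyDelayN n (tyIO t)) (tyIO (tyDelayN n t)))
  | bind {t s : PreTy} : IsTy t → IsTy s →
      ConstTy .bind (tyArrow (tyIO t) (tyLolli (tyLolli t (tyIO s)) (tyIO s)))
  | pairLin {t s : PreTy} : IsTy t → IsTy s → Lin t →
      ConstTy .pair (tyArrow t (tyLolli s (tyProd t s)))
  | pairUn {t s : PreTy} : IsTy t → IsTy s → Un t →
      ConstTy .pair (tyArrow t (tyArrow s (tyProd t s)))

open PreTy in
/-- The typing judgement for expressions (Table 3). -/
inductive HasTy : Env → Expr → PreTy → Prop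
  | delayI {Γ : Env} {e : Expr} {t : PreTy} :
      HasTy Γ e t → HasTy Γ e (tyDelay t)
  | const {Γ : Env} {k : Const} {t : PreTy} :
      EnvUn Γ → ConstTy k t → HasTy Γ (.const k) t
  | ax {Γ : Env} {u : Name} {t : PreTy} :
      (∀ v s, v ≠ u → Γ v = some s → Un s) → Γ u = some t → IsTy t →
      HasTy Γ (Expr.ofName u) t
  | arrI {Γ : Env} {x : String} {e : Expr} {t s : PreTy} {n : ℕ} :
      EnvUn Γ → Γ (.var x) = none → IsTy (tyArrow t s) →
      HasTy (Γ.upd (.var x) (tyDelayN n t)) e (tyDelayN n s) →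
      HasTy Γ (.lam x e) (tyDelayN n (tyArrow t s))
  | arrE {Γ₁ Γ₂ : Env} {e₁ e₂ : Expr} {t s : PreTy} {n : ℕ} :
      Env.Compat Γ₁ Γ₂ →
      HasTy Γ₁ e₁ (tyDelayN n (tyArrow t s)) → HasTy Γ₂ e₂ (tyDelayN n t) →
      HasTy (Γ₁.add Γ₂) (.app e₁ e₂) (tyDelayN n s)
  | lolI {Γ : Env} {x : String} {e : Expr} {t s : PreTy} {n : ℕ} :
      Γ (.var x) = none → IsTy (tyLolli t s) →
      HasTy (Γ.upd (.var x) (tyDelayN n t)) e (tyDelayN n s) →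
      HasTy Γ (.lam x e) (tyDelayN n (tyLolli t s))
  | lolE {Γ₁ Γ₂ : Env} {e₁ e₂ : Expr} {t s : PreTy} {n : ℕ} :
      Env.Compat Γ₁ Γ₂ →
      HasTy Γ₁ e₁ (tyDelayN n (tyLolli t s)) → HasTy Γ₂ e₂ (tyDelayN n t) →
      HasTy (Γ₁.add Γ₂) (.app e₁ e₂) (tyDelayN n s)
  | prodE {Γ₁ Γ₂ : Env} {e f : Expr} {x y : String} {t₁ t₂ s : PreTy} {n : ℕ} :
      Env.Compat Γ₁ Γ₂ → x ≠ y → Γ₂ (.var x) = none → Γ₂ (.var y) = none →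
      HasTy Γ₁ e (tyDelayN n (tyProd t₁ t₂)) →
      HasTy ((Γ₂.upd (.var x) (tyDelayN n t₁)).upd (.var y) (tyDelayN n t₂)) f (tyDelayN n s) →
      HasTy (Γ₁.add Γ₂) (.split e x y f) (tyDelayN n s)

end SID
namespace SID

/-! ## Indexed type interpretation -/

/-- Expressions reducing to a normal form. -/
def NSet : Set Expr := {e | ∃ f, EMulti e f ∧ NormalE f}

/-- Expressions reducing to a stuck variable `E[x]`. -/
def NvSet : Set Expr := {e | ∃ (E : ECtx) (x : String), EMulti e (E.fill (.var x))}

/-- Head I/O redexes. -/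
def IOHead (e₀ : Expr) : Prop :=
  (∃ a p f, e₀ = Expr.sendE a p f) ∨ (∃ a p, e₀ = Expr.recvE a p) ∨
  (∃ a, e₀ = Expr.openE a) ∨ (∃ f, e₀ = Expr.futureE f)

/-- Expressions reducing to a pending I/O action `C[e₀]`. -/
def NioSet : Set Expr := {e | ∃ (C : PCtx) (e₀ : Expr), EMulti e (C.fill e₀) ∧ IOHead e₀}

/-- Expressions reducing to an abstraction or to `E[k]`. -/
def RedLamOrK (e : Expr) : Prop :=
  (∃ x f, EMulti e (.lam x f)) ∨ (∃ (E : ECtx) (k : Const), EMulti e (E.fill (.const k)))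

/-- Rank certificates: `RankD t n` witnesses `rank t = n` (Definition 4.7). -/
inductive RankD : PreTy → ℕ → Type
  | base {t : PreTy} :
      t.label = .unit ∨ t.label = .endl ∨ t.label = .inp ∨ t.label = .out ∨ t.label = .shared →
      RankD t 0
  | delay {t : PreTy} : t.label = .delay → RankD t 0
  | io {t : PreTy} {n : ℕ} : t.label = .io → RankD (t.childN 0) n → RankD t (n + 1)
  | prod {t : PreTy} {m n : ℕ} : t.label = .prod →
      RankD (t.childN 0) m → RankD (t.childN 1) n → RankD t (max m n + 1)
  | arrow {t : PreTy} {m n : ℕ} : t.label = .arrow →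
      RankD (t.childN 0) m → RankD (t.childN 1) n → RankD t (max m n + 1)
  | lolli {t : PreTy} {m n : ℕ} : t.label = .lolli →
      RankD (t.childN 0) m → RankD (t.childN 1) n → RankD t (max m n + 1)

/-- Interpretation at rank-0 non-delay types. -/
def interpBase (t : PreTy) : Set Expr :=
  NvSet ∪
    (if t.label = .unit then {e | EMulti e (.const .unit)}
     else if t.label = .shared then {e | ∃ a, EMulti e (.chan a)}
     else {e | ∃ a p, EMulti e (.ep a p)})

/-- Inner recursion of the indexed type interpretation: `prev j` is the
interpretation at all time indices `j < i`. -/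
def interpAux (prev : ℕ → PreTy → Set Expr) (i : ℕ) :
    (t : PreTy) → (n : ℕ) → RankD t n → Set Expr := fun t n d =>
  match d with
  | .base _ => interpBase t
  | .delay _ => if i = 0 then Set.univ else prev (i - 1) (t.childN 0)
  | .io (n := n') _ d' =>
      NvSet ∪ NioSet ∪
        {e | ∃ e', EMulti e (Expr.retE e') ∧ e' ∈ interpAux prev i (t.childN 0) n' d'}
  | .prod (m := m') (n := n') _ d₁ d₂ =>
      NvSet ∪
        {e | ∃ e₁ e₂, EMulti e (Expr.pairE e₁ e₂) ∧
          e₁ ∈ interpAux prev i (t.childN 0) m' d₁ ∧ e₂ ∈ interpAux prev i (t.childN 1) n' d₂}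
  | .arrow (m := m') (n := n') _ d₁ d₂ =>
      NvSet ∪
        {e | RedLamOrK e ∧ ∀ j, j ≤ i → ∀ e',
          e' ∈ (if j = i then interpAux prev i (t.childN 0) m' d₁ else prev j (t.childN 0)) →
          Expr.app e e' ∈
            (if j = i then interpAux prev i (t.childN 1) n' d₂ else prev j (t.childN 1))}
  | .lolli (m := m') (n := n') _ d₁ d₂ =>
      NvSet ∪
        {e | RedLamOrK e ∧ ∀ j, j ≤ i → ∀ e',
          e' ∈ (if j = i then interpAux prev i (t.childN 0) m' d₁ else prev j (t.childN 0)) →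
          Expr.app e e' ∈
            (if j = i then interpAux prev i (t.childN 1) n' d₂ else prev j (t.childN 1))}

/-- The indexed type interpretation `⟦t⟧ᵢ` (Definition 4.8). -/
noncomputable def interp : ℕ → PreTy → Set Expr := fun i =>
  Nat.strongRecOn i fun i ih t =>
    ⋃ (n : ℕ), ⋃ (d : RankD t n),
      interpAux (fun j s => if h : j < i then ih j h s else ∅) i t n d

/-- Simultaneous substitution of expressions for the free variables. -/
def Expr.msubst (δ : String → Expr) : Expr → Expr
  | .const k => .const k
  | .var x => δ x
  | .chan a => .chan a
  | .ep a p => .ep a p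
  | .lam x e => .lam x (e.msubst fun y => if y = x then .var y else δ y)
  | .app e f => .app (e.msubst δ) (f.msubst δ)
  | .split e x y f =>
      .split (e.msubst δ) x y (f.msubst fun z => if z = x ∨ z = y then .var z else δ z)

/-- `δ ⊨ᵢ Γ`. -/
def SatEnv (δ : String → Expr) (i : ℕ) (Γ : Env) : Prop :=
  ∀ x t, Γ (.var x) = some t → δ x ∈ interp i t

end SID
namespace SID

/-! ## Processes -/

inductive Proc : Type
  | nil : Proc
  | thread : String → Expr → Proc
  | server : String → Expr → Proc
  | par : Proc → Proc → Proc
  | nu : BName → Proc → Proc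
  deriving DecidableEq

namespace Proc

/-- Free variables of a process (thread names are free occurrences). -/
def fv : Proc → Set String
  | .nil => ∅
  | .thread x e => {x} ∪ e.fv
  | .server _ e => e.fv
  | .par P Q => P.fv ∪ Q.fv
  | .nu (.var x) P => P.fv \ {x}
  | .nu (.chan _) P => P.fv

/-- Free channels of a process. -/
def fc : Proc → Set String
  | .nil => ∅
  | .thread _ e => e.fc
  | .server a e => {a} ∪ e.fc
  | .par P Q => P.fc ∪ Q.fc
  | .nu (.var _) P => P.fc
  | .nu (.chan a) P => P.fc \ {a}

/-- Substitution of an expression for a variable in a process. -/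
def subst : Proc → String → Expr → Proc
  | .nil, _, _ => .nil
  | .thread y e, x, f => .thread y (e.subst x f)
  | .server a e, x, f => .server a (e.subst x f)
  | .par P Q, x, f => .par (P.subst x f) (Q.subst x f)
  | .nu X P, x, f => if X = .var x then .nu X P else .nu X (P.subst x f)

end Proc

def BName.freeIn : BName → Proc → Prop
  | .var x, P => x ∈ P.fv
  | .chan a, P => a ∈ P.fc

/-- Structural congruence. -/
inductive SC : Proc → Proc → Prop
  | refl (P : Proc) : SC P P
  | symm {P Q : Proc} : SC P Q → SC Q P
  | trans {P Q R : Proc} : SC P Q → SC Q R → SC P R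
  | parComm (P Q : Proc) : SC (.par P Q) (.par Q P)
  | parAssoc (P Q R : Proc) : SC (.par (.par P Q) R) (.par P (.par Q R))
  | parNil (P : Proc) : SC (.par P .nil) P
  | nuNil (X : BName) : SC (.nu X .nil) .nil
  | nuComm (X Y : BName) (P : Proc) : SC (.nu X (.nu Y P)) (.nu Y (.nu X P))
  | nuPar {X : BName} {P Q : Proc} : ¬ X.freeIn Q → SC (.nu X (.par P Q)) (.par (.nu X P) Q)
  | parCong {P P' Q : Proc} : SC P P' → SC (.par P Q) (.par P' Q)
  | nuCong {X : BName} {P P' : Proc} : SC P P' → SC (.nu X P) (.nu X P')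

/-- Reduction of processes (Table 2). -/
inductive PStep : Proc → Proc → Prop
  | popen {a : String} {e : Expr} {x : String} {C : PCtx} {c y : String} :
      c ∉ Proc.fc (.par (.server a e) (.thread x (C.fill (Expr.openE a)))) →
      y ∉ Proc.fv (.par (.server a e) (.thread x (C.fill (Expr.openE a)))) →
      c ≠ a → y ≠ x →
      PStep (.par (.server a e) (.thread x (C.fill (Expr.openE a))))
            (.par (.server a e)
              (.nu (.chan c) (.nu (.var y)
                (.par (.thread x (C.fill (Expr.retE (.ep c .pos))))
                      (.thread y (.app e (.ep c .neg)))))))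
  | comm {x : String} {C : PCtx} {a : String} {p : Pol} {e : Expr} {y : String} {C' : PCtx} :
      PStep (.par (.thread x (C.fill (Expr.sendE a p e)))
                  (.thread y (C'.fill (Expr.recvE a p.dual))))
            (.par (.thread x (C.fill (Expr.retE (.ep a p))))
                  (.thread y (C'.fill (Expr.retE (Expr.pairE e (.ep a p.dual))))))
  | future {x : String} {C : PCtx} {e : Expr} {y : String} :
      y ∉ Proc.fv (.thread x (C.fill (Expr.futureE e))) →
      PStep (.thread x (C.fill (Expr.futureE e)))
            (.nu (.var y) (.par (.thread x (C.fill (Expr.retE (.var y)))) (.thread y e)))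
  | ret {x : String} {e : Expr} {P : Proc} :
      PStep (.nu (.var x) (.par (.thread x (Expr.retE e)) P)) (P.subst x e)
  | thread {x : String} {e f : Expr} : EStep e f → PStep (.thread x e) (.thread x f)
  | nu {X : BName} {P Q : Proc} : PStep P Q → PStep (.nu X P) (.nu X Q)
  | par {P Q R : Proc} : PStep P Q → PStep (.par P R) (.par Q R)
  | cong {P P' Q Q' : Proc} : SC P P' → PStep P' Q' → SC Q' Q → PStep P Q

/-- The reduction `→⁻`, i.e. reduction without the rules r-open and r-future. -/
inductive PStepM : Proc → Proc → Prop
  | comm {x : String} {C : PCtx} {a : String} {p : Pol} {e : Expr} {y : String} {C' : PCtx} :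
      PStepM (.par (.thread x (C.fill (Expr.sendE a p e)))
                  (.thread y (C'.fill (Expr.recvE a p.dual))))
            (.par (.thread x (C.fill (Expr.retE (.ep a p))))
                  (.thread y (C'.fill (Expr.retE (Expr.pairE e (.ep a p.dual))))))
  | ret {x : String} {e : Expr} {P : Proc} :
      PStepM (.nu (.var x) (.par (.thread x (Expr.retE e)) P)) (P.subst x e)
  | thread {x : String} {e f : Expr} : EStep e f → PStepM (.thread x e) (.thread x f)
  | nu {X : BName} {P Q : Proc} : PStepM P Q → PStepM (.nu X P) (.nu X Q)
  | par {P Q R : Proc} : PStepM P Q → PStepM (.par P R) (.par Q R)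
  | cong {P P' Q Q' : Proc} : SC P P' → PStepM P' Q' → SC Q' Q → PStepM P Q

/-! ## Process typing -/

/-- Resource environments. -/
abbrev Res : Type := BName → Option PreTy

namespace Res

def single (X : BName) (t : PreTy) : Res := fun Y => if Y = X then some t else none

def disj (Δ₁ Δ₂ : Res) : Prop := ∀ X, Δ₁ X = none ∨ Δ₂ X = none

def add (Δ₁ Δ₂ : Res) : Res := fun X =>
  match Δ₁ X with
  | some t => some t
  | none => Δ₂ X

def upd (Δ : Res) (X : BName) (t : PreTy) : Res := fun Y => if Y = X then some t else Δ Y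

end Res

open PreTy in
/-- The typing judgement for processes (Table 4). -/
inductive ProcTy : Env → Proc → Res → Prop
  | thread {Γ : Env} {x : String} {e : Expr} {t : PreTy} {n : ℕ} :
      Γ (.var x) = none →
      HasTy Γ e (tyDelayN n (tyIO t)) →
      ProcTy Γ (.thread x e) (Res.single (.var x) (tyDelayN n t))
  | server {Γ : Env} {a : String} {e : Expr} {T t : PreTy} :
      SharedOnly Γ → Un t → IsSTy T →
      (Γ (.chan a) = none ∨ Γ (.chan a) = some (tyShared T)) →
      HasTy Γ e (tyArrow (dualS T) (tyIO t)) →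
      ProcTy (Γ.upd (.chan a) (tyShared T)) (.server a e) (Res.single (.chan a) (tyShared T))
  | par {Γ₁ Γ₂ : Env} {P₁ P₂ : Proc} {Δ₁ Δ₂ : Res} :
      Env.Compat Γ₁ Γ₂ → Res.disj Δ₁ Δ₂ →
      ProcTy Γ₁ P₁ Δ₁ → ProcTy Γ₂ P₂ Δ₂ →
      ProcTy (Γ₁.add Γ₂) (.par P₁ P₂) (Res.add Δ₁ Δ₂)
  | session {Γ : Env} {a : String} {T : PreTy} {P : Proc} {Δ : Res} {p : Pol} :
      Γ (.ep a .pos) = none → Γ (.ep a .neg) = none → IsSTy T →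
      ProcTy ((Γ.upd (.ep a p) T).upd (.ep a p.dual) (dualS T)) P Δ →
      ProcTy Γ (.nu (.chan a) P) Δ
  | new {Γ : Env} {X : BName} {t : PreTy} {P : Proc} {Δ : Res} :
      Γ X.toName = none → Δ X = none →
      ProcTy (Γ.upd X.toName t) P (Δ.upd X t) →
      ProcTy Γ (.nu X P) Δ

/-- A process is typeable. -/
def Typeable (P : Proc) : Prop := ∃ Γ Δ, ProcTy Γ P Δ

/-! ## Initial, reachable and final processes -/

inductive ThreadOnly : Proc → Prop
  | nil : ThreadOnly .nil
  | thread (x : String) (e : Expr) : ThreadOnly (.thread x e)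
  | par {P Q : Proc} : ThreadOnly P → ThreadOnly Q → ThreadOnly (.par P Q)

inductive ServerOnly : Proc → Prop
  | nil : ServerOnly .nil
  | server (a : String) (e : Expr) : ServerOnly (.server a e)
  | par {P Q : Proc} : ServerOnly P → ServerOnly Q → ServerOnly (.par P Q)

def nuList (Xs : List BName) (P : Proc) : Proc := Xs.foldr .nu P

def servList : List (String × Expr) → Proc
  | [] => .nil
  | (a, e) :: l => .par (.server a e) (servList l)

def Proc.Closed (P : Proc) : Prop := P.fv = ∅ ∧ P.fc = ∅

/-- Initial processes: one main thread together with the needed servers. -/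
def Initial (P : Proc) : Prop :=
  P.Closed ∧ Typeable P ∧
  ∃ (x : String) (e : Expr) (l : List (String × Expr)),
    SC P (.nu (.var x) (nuList (l.map fun ae => BName.chan ae.1)
      (.par (.thread x e) (servList l))))

/-- Reachable processes. -/
def Reachable (P : Proc) : Prop :=
  ∃ P₀, Initial P₀ ∧ Relation.ReflTransGen PStep P₀ P

/-- Final processes: only servers are left. -/
def Final (P : Proc) : Prop :=
  ∃ l : List (String × Expr),
    SC P (nuList (l.map fun ae => BName.chan ae.1) (servList l))

end SID
namespace SID

/-! ## Well-polarisation -/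

/-- Polarised names. -/
abbrev PName : Type := BName × Pol

/-- Polarised names of an expression: free endpoints plus `x⁺` for free variables. -/
def Expr.pnames (e : Expr) : Set PName :=
  {pn | (∃ a p, pn = (BName.chan a, p) ∧ (a, p) ∈ e.feps) ∨
        (∃ x, pn = (BName.var x, Pol.pos) ∧ x ∈ e.fv)}

/-- Polarised names of a process. -/
def Proc.pnames : Proc → Set PName
  | .nil => ∅
  | .thread x e => insert (BName.var x, Pol.neg) e.pnames
  | .server _ e => e.pnames
  | .par P Q => P.pnames ∪ Q.pnames
  | .nu X P => P.pnames \ {pn | pn.1 = X}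

/-- Independence of sets of polarised names. -/
def Indep (A B : Set PName) : Prop :=
  ∀ (X : BName) (p q : Pol), (X, p) ∈ A → (X, q) ∈ B → p = q

/-- The least well-polarisation predicate on thread-only processes (Definition 5.4). -/
inductive WP : Proc → Prop
  | nil : WP .nil
  | thread {x : String} {e : Expr} :
      (BName.var x, Pol.pos) ∉ e.pnames → Indep e.pnames e.pnames →
      WP (.thread x e)
  | par {P Q : Proc} (X : BName) (p : Pol) :
      WP P → WP Q →
      Indep (P.pnames \ {(X, p)}) (Q.pnames \ {(X, p.dual)}) →
      WP (.par P Q)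

/-- `Decomp P Q R`: `P ≡ (νX₁…Xₙ)(Q|R)` with `Q = threads(P)` and `R = servers(P)`. -/
def Decomp (P Q R : Proc) : Prop :=
  ∃ Xs : List BName, SC P (nuList Xs (.par Q R)) ∧ ThreadOnly Q ∧ ServerOnly R

/-- A process is well-polarised if `⊨ Q` for some `Q ≡ threads(P)`. -/
def WellPolarised (P : Proc) : Prop :=
  ∃ Q R, Decomp P Q R ∧ WP Q

/-- The subprocess relation `P ⊆ Q` (Definition 5.6). -/
inductive SubP : Proc → Proc → Prop
  | nil : SubP .nil .nil
  | thread (x : String) (e : Expr) : SubP (.thread x e) (.thread x e)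
  | parL {P' P Q : Proc} : SubP P' P → SubP P' (.par P Q)
  | parR {Q' P Q : Proc} : SubP Q' Q → SubP Q' (.par P Q)
  | parBoth {P' Q' P Q : Proc} : SubP P' P → SubP Q' Q → SubP (.par P' Q') (.par P Q)

/-! ## Occurrence counting in processes -/

/-- Free occurrences of a name in the bodies of the threads of a process. -/
def Proc.countThreadBody (u : Name) : Proc → ℕ
  | .nil => 0
  | .thread _ e => e.count u
  | .server _ _ => 0
  | .par P Q => P.countThreadBody u + Q.countThreadBody u
  | .nu X P => if X.toName = u then 0 else P.countThreadBody u

/-- Free occurrences of a name in the bodies of the servers of a process. -/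
def Proc.countServerBody (u : Name) : Proc → ℕ
  | .nil => 0
  | .thread _ _ => 0
  | .server _ e => e.count u
  | .par P Q => P.countServerBody u + Q.countServerBody u
  | .nu X P => if X.toName = u then 0 else P.countServerBody u

/-- Occurrences of a name as the name of a thread of a process. -/
def Proc.countThreadName (u : Name) : Proc → ℕ
  | .nil => 0
  | .thread x _ => if Name.var x = u then 1 else 0
  | .server _ _ => 0
  | .par P Q => P.countThreadName u + Q.countThreadName u
  | .nu X P => if X.toName = u then 0 else P.countThreadName u

/-! ## Precedence between threads -/

/-- The endpoint `a^p` is ready in `e`. -/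
def ReadyIn (a : String) (p : Pol) (e : Expr) : Prop :=
  (∃ (C : PCtx) (f : Expr), e = C.fill (Expr.sendE a p f)) ∨
  (∃ C : PCtx, e = C.fill (Expr.recvE a p))

/-- The endpoint `a^p` is blocked in `e`. -/
def BlockedIn (a : String) (p : Pol) (e : Expr) : Prop :=
  (∃ (C : PCtx) (b : String) (q : Pol) (f : Expr),
      e = C.fill (Expr.sendE b q f) ∧ a ≠ b ∧ ((a, p) ∈ C.feps ∨ (a, p) ∈ f.feps)) ∨
  (∃ (C : PCtx) (b : String) (q : Pol),
      e = C.fill (Expr.recvE b q) ∧ a ≠ b ∧ (a, p) ∈ C.feps) ∨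
  (∃ (E : ECtx) (x : String), e = E.fill (.var x) ∧ (a, p) ∈ E.feps)

/-- The expression `e` precedes the expression `f`. -/
def EPrec (e f : Expr) : Prop :=
  ∃ a p, ReadyIn a p f ∧ BlockedIn a p.dual e

/-- The thread `⟨x⟩e` precedes the thread `⟨y⟩f`. -/
def TPrec (xe yf : String × Expr) : Prop :=
  EPrec xe.2 yf.2 ∨ ∃ E : ECtx, yf.2 = E.fill (.var xe.1)

end SID

namespace SID
namespace PreTy

@[simp] lemma label_mk1 (l : TyLabel) (t : PreTy) : (mk1 l t).label = l := rfl

@[simp] lemma label_mk2 (l : TyLabel) (t s : PreTy) : (mk2 l t s).label = l := rfl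

@[simp] lemma label_tyUnit : tyUnit.label = .unit := rfl

lemma childN_mk1 (l : TyLabel) (t : PreTy) (h : 0 < l.arity) :
    (mk1 l t).childN 0 = t := by
  have h' : 0 < (mk1 l t).label.arity := by simpa using h
  unfold childN; rw [dif_pos h']; rfl

lemma childN_mk2_0 (l : TyLabel) (t s : PreTy) (h : 0 < l.arity) :
    (mk2 l t s).childN 0 = t := by
  have h' : 0 < (mk2 l t s).label.arity := by simpa using h
  unfold childN; rw [dif_pos h']; rfl

lemma childN_mk2_1 (l : TyLabel) (t s : PreTy) (h : 1 < l.arity) :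
    (mk2 l t s).childN 1 = s := by
  have h' : 1 < (mk2 l t s).label.arity := by simpa using h
  unfold childN; rw [dif_pos h']; rfl

end PreTy
end SID
namespace SID
namespace PreTy

lemma Subtree.trans' {u s t : PreTy} (h1 : Subtree u s) (h2 : Subtree s t) :
    Subtree u t := by
  induction h2 with
  | refl => exact h1
  | child n hlt _ ih => exact .child n hlt ih

/-- The "infinitely many delays on every infinite path" condition. -/
def DelayCond (t : PreTy) : Prop :=
  ∀ p, InfPath t p → ∀ n, ∃ m, n ≤ m ∧ (p m).label = .delay

lemma DelayCond.child {t : PreTy} (h : DelayCond t) {k : ℕ}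
    (hk : k < t.label.arity) : DelayCond (t.childN k) := by
  intro p hp n
  set q : ℕ → PreTy := fun i => Nat.casesOn i t p with hqdef
  have hq : InfPath t q := by
    refine ⟨rfl, fun i => ?_⟩
    cases i with
    | zero => exact ⟨k, hk, hp.1⟩
    | succ j => exact hp.2 j
  obtain ⟨m, hm, hd⟩ := h q hq (n + 1)
  obtain ⟨m', rfl⟩ : ∃ m', m = m' + 1 := ⟨m - 1, by omega⟩
  exact ⟨m', by omega, hd⟩

lemma IsTy.child {t : PreTy} (h : IsTy t) {k : ℕ} (hk : k < t.label.arity) :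
    IsTy (t.childN k) := by
  obtain ⟨h1, h2, h3, h4⟩ := h
  refine ⟨h1.subset fun u hu => Subtree.child k hk hu, DelayCond.child h2 hk,
    fun s hs => h3 s (Subtree.child k hk hs), fun s hs => h4 s (Subtree.child k hk hs)⟩

lemma IsTy.subtree {s t : PreTy} (h : IsTy t) (hs : Subtree s t) : IsTy s := by
  induction hs with
  | refl => exact h
  | child n hlt _ ih => exact ih (h.child hlt)

end PreTy
end SID
namespace SID
namespace PreTy

lemma subtree_mk1_elim {l : TyLabel} (hl : l.arity = 1) {t u : PreTy}
    (h : Subtree u (mk1 l t)) : u = mk1 l t ∨ Subtree u t := by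
  cases h with
  | refl => exact Or.inl rfl
  | child n hlt hsub =>
    right
    have hn : n = 0 := by simp [hl] at hlt; omega
    subst hn
    rwa [childN_mk1 l t (by omega)] at hsub

lemma subtree_mk2_elim {l : TyLabel} (hl : l.arity = 2) {t s u : PreTy}
    (h : Subtree u (mk2 l t s)) : u = mk2 l t s ∨ Subtree u t ∨ Subtree u s := by
  cases h with
  | refl => exact Or.inl rfl
  | child n hlt hsub =>
    right
    have hn : n = 0 ∨ n = 1 := by simp [hl] at hlt; omega
    rcases hn with rfl | rfl
    · left; rwa [childN_mk2_0 l t s (by omega)] at hsub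
    · right; rwa [childN_mk2_1 l t s (by omega)] at hsub

lemma delayCond_mk1 {l : TyLabel} (hl : l.arity = 1) {t : PreTy}
    (h : DelayCond t) : DelayCond (mk1 l t) := by
  intro p hp n
  obtain ⟨k, hk, hp1⟩ := hp.2 0
  rw [hp.1] at hk hp1
  have hk0 : k = 0 := by simp [hl] at hk; omega
  subst hk0
  rw [childN_mk1 l t (by omega)] at hp1
  have hq : InfPath t (fun i => p (i + 1)) := ⟨hp1, fun i => hp.2 (i + 1)⟩
  obtain ⟨m, hm, hd⟩ := h _ hq n
  exact ⟨m + 1, by omega, hd⟩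

lemma delayCond_mk2 {l : TyLabel} (hl : l.arity = 2) {t s : PreTy}
    (ht : DelayCond t) (hs : DelayCond s) : DelayCond (mk2 l t s) := by
  intro p hp n
  obtain ⟨k, hk, hp1⟩ := hp.2 0
  rw [hp.1] at hk hp1
  have hq : InfPath t (fun i => p (i + 1)) ∨ InfPath s (fun i => p (i + 1)) := by
    have hk01 : k = 0 ∨ k = 1 := by simp [hl] at hk; omega
    rcases hk01 with rfl | rfl
    · rw [childN_mk2_0 l t s (by omega)] at hp1
      exact Or.inl ⟨hp1, fun i => hp.2 (i + 1)⟩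
    · rw [childN_mk2_1 l t s (by omega)] at hp1
      exact Or.inr ⟨hp1, fun i => hp.2 (i + 1)⟩
  rcases hq with hq | hq
  · obtain ⟨m, hm, hd⟩ := ht _ hq n
    exact ⟨m + 1, by omega, hd⟩
  · obtain ⟨m, hm, hd⟩ := hs _ hq n
    exact ⟨m + 1, by omega, hd⟩

lemma isTy_mk1 {l : TyLabel} (hl : l.arity = 1) {t : PreTy} (h : IsTy t) :
    IsTy (mk1 l t) := by
  obtain ⟨h1, h2, h3, h4⟩ := h
  have hla : l ≠ .arrow := by rintro rfl; simp [TyLabel.arity] at hl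
  have hll : l ≠ .lolli := by rintro rfl; simp [TyLabel.arity] at hl
  refine ⟨?_, delayCond_mk1 hl h2, ?_, ?_⟩
  · refine Set.Finite.subset (h1.insert (mk1 l t)) ?_
    intro u hu
    rcases subtree_mk1_elim hl hu with rfl | hu
    · exact Set.mem_insert _ _
    · exact Set.mem_insert_of_mem _ hu
  · intro u hu hlab
    rcases subtree_mk1_elim hl hu with rfl | hu
    · exact absurd (by simpa using hlab) hla
    · exact h3 u hu hlab
  · intro u hu hlab
    rcases subtree_mk1_elim hl hu with rfl | hu
    · exact absurd (by simpa using hlab) hll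
    · exact h4 u hu hlab

lemma isTy_mk2 {l : TyLabel} (hl : l.arity = 2) {t s : PreTy}
    (ht : IsTy t) (hs : IsTy s)
    (harrow : l = .arrow → Un s → Un t) (hlolli : l = .lolli → Lin s) :
    IsTy (mk2 l t s) := by
  obtain ⟨h1, h2, h3, h4⟩ := ht
  obtain ⟨g1, g2, g3, g4⟩ := hs
  refine ⟨?_, delayCond_mk2 hl h2 g2, ?_, ?_⟩
  · refine Set.Finite.subset ((h1.union g1).insert (mk2 l t s)) ?_
    intro u hu
    rcases subtree_mk2_elim hl hu with rfl | hu | hu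
    · exact Set.mem_insert _ _
    · exact Set.mem_insert_of_mem _ (Or.inl hu)
    · exact Set.mem_insert_of_mem _ (Or.inr hu)
  · intro u hu hlab
    rcases subtree_mk2_elim hl hu with rfl | hu | hu
    · have hl' : l = .arrow := by simpa using hlab
      rw [childN_mk2_0 l t s (by omega), childN_mk2_1 l t s (by omega)]
      exact harrow hl'
    · exact h3 u hu hlab
    · exact g3 u hu hlab
  · intro u hu hlab
    rcases subtree_mk2_elim hl hu with rfl | hu | hu
    · have hl' : l = .lolli := by simpa using hlab
      rw [childN_mk2_1 l t s (by omega)]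
      exact hlolli hl'
    · exact h4 u hu hlab
    · exact g4 u hu hlab

lemma isTy_tyUnit : IsTy tyUnit := by
  have hsub : ∀ u, Subtree u tyUnit → u = tyUnit := by
    intro u hu
    cases hu with
    | refl => rfl
    | child n hlt _ => simp [label_tyUnit, TyLabel.arity] at hlt
  refine ⟨?_, ?_, ?_, ?_⟩
  · exact Set.Finite.subset (Set.finite_singleton tyUnit) fun u hu => hsub u hu
  · intro p hp n
    obtain ⟨k, hk, _⟩ := hp.2 0
    rw [hp.1] at hk
    simp [label_tyUnit, TyLabel.arity] at hk
  · intro u hu hlab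
    rw [hsub u hu] at hlab
    simp at hlab
  · intro u hu hlab
    rw [hsub u hu] at hlab
    simp at hlab

end PreTy
end SID
namespace SID
namespace PreTy

lemma childN_tyDelay (t : PreTy) : (tyDelay t).childN 0 = t :=
  childN_mk1 _ _ (by simp [TyLabel.arity])

@[simp] lemma tyDelayN_zero (t : PreTy) : tyDelayN 0 t = t := rfl

lemma tyDelayN_succ (n : ℕ) (t : PreTy) :
    tyDelayN (n + 1) t = tyDelay (tyDelayN n t) := by
  simp [tyDelayN, Function.iterate_succ_apply']

@[simp] lemma label_tyDelay (t : PreTy) : (tyDelay t).label = .delay := rfl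
@[simp] lemma label_tyIO (t : PreTy) : (tyIO t).label = .io := rfl
@[simp] lemma label_tyShared (t : PreTy) : (tyShared t).label = .shared := rfl
@[simp] lemma label_tyProd (t s : PreTy) : (tyProd t s).label = .prod := rfl
@[simp] lemma label_tyArrow (t s : PreTy) : (tyArrow t s).label = .arrow := rfl
@[simp] lemma label_tyLolli (t s : PreTy) : (tyLolli t s).label = .lolli := rfl
@[simp] lemma label_tyInp (t s : PreTy) : (tyInp t s).label = .inp := rfl
@[simp] lemma label_tyOut (t s : PreTy) : (tyOut t s).label = .out := rfl

lemma childN_tyProd_0 (t s : PreTy) : (tyProd t s).childN 0 = t :=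
  childN_mk2_0 .prod t s (by simp [TyLabel.arity])
lemma childN_tyProd_1 (t s : PreTy) : (tyProd t s).childN 1 = s :=
  childN_mk2_1 .prod t s (by simp [TyLabel.arity])

lemma lin_tyIO (t : PreTy) : Lin (tyIO t) := Lin.io rfl

lemma lin_tyLolli (t s : PreTy) : Lin (tyLolli t s) := Lin.lolli rfl

lemma lin_tyInp (t s : PreTy) : Lin (tyInp t s) := Lin.inp rfl

lemma lin_tyOut (t s : PreTy) : Lin (tyOut t s) := Lin.out rfl

lemma lin_tyProd_left {t : PreTy} (s : PreTy) (h : Lin t) : Lin (tyProd t s) :=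
  Lin.prodL rfl (by rwa [childN_tyProd_0])

lemma lin_tyProd_right (t : PreTy) {s : PreTy} (h : Lin s) : Lin (tyProd t s) :=
  Lin.prodR rfl (by rwa [childN_tyProd_1])

lemma lin_tyDelayN {t : PreTy} (n : ℕ) (h : Lin t) : Lin (tyDelayN n t) := by
  induction n with
  | zero => exact h
  | succ n ih =>
    rw [tyDelayN_succ]
    exact Lin.delay rfl (by rwa [childN_tyDelay])

lemma isTy_tyDelay {t : PreTy} (h : IsTy t) : IsTy (tyDelay t) :=
  isTy_mk1 (by simp [TyLabel.arity]) h

lemma isTy_tyDelayN {t : PreTy} (n : ℕ) (h : IsTy t) : IsTy (tyDelayN n t) := by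
  induction n with
  | zero => exact h
  | succ n ih => rw [tyDelayN_succ]; exact isTy_tyDelay ih

lemma isTy_tyIO {t : PreTy} (h : IsTy t) : IsTy (tyIO t) :=
  isTy_mk1 (by simp [TyLabel.arity]) h

lemma isTy_tyShared {t : PreTy} (h : IsTy t) : IsTy (tyShared t) :=
  isTy_mk1 (by simp [TyLabel.arity]) h

lemma isTy_tyProd {t s : PreTy} (ht : IsTy t) (hs : IsTy s) : IsTy (tyProd t s) :=
  isTy_mk2 (by simp [TyLabel.arity]) ht hs (by simp) (by simp)

lemma isTy_tyInp {t s : PreTy} (ht : IsTy t) (hs : IsTy s) : IsTy (tyInp t s) :=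
  isTy_mk2 (by simp [TyLabel.arity]) ht hs (by simp) (by simp)

lemma isTy_tyOut {t s : PreTy} (ht : IsTy t) (hs : IsTy s) : IsTy (tyOut t s) :=
  isTy_mk2 (by simp [TyLabel.arity]) ht hs (by simp) (by simp)

lemma isTy_tyArrow {t s : PreTy} (ht : IsTy t) (hs : IsTy s) (hun : Un s → Un t) :
    IsTy (tyArrow t s) :=
  isTy_mk2 (by simp [TyLabel.arity]) ht hs (fun _ => hun) (by simp)

lemma isTy_tyLolli {t s : PreTy} (ht : IsTy t) (hs : IsTy s) (hlin : Lin s) :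
    IsTy (tyLolli t s) :=
  isTy_mk2 (by simp [TyLabel.arity]) ht hs (by simp) (fun _ => hlin)

lemma subtree_tyDelayN (n : ℕ) (t : PreTy) : Subtree t (tyDelayN n t) := by
  induction n with
  | zero => exact .refl t
  | succ n ih =>
    rw [tyDelayN_succ]
    refine .child 0 (by simp [TyLabel.arity]) ?_
    rwa [childN_tyDelay]


lemma subtree_mk2_left (l : TyLabel) (hl : 0 < l.arity) (t s : PreTy) :
    Subtree t (mk2 l t s) := by
  refine .child 0 (by simpa using hl) ?_
  rw [childN_mk2_0 l t s hl]
  exact .refl t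

lemma subtree_mk2_right (l : TyLabel) (hl : 1 < l.arity) (t s : PreTy) :
    Subtree s (mk2 l t s) := by
  refine .child 1 (by simpa using hl) ?_
  rw [childN_mk2_1 l t s hl]
  exact .refl s

lemma constTy_isTy {k : Const} {t : PreTy} (h : ConstTy k t) : IsTy t := by
  cases h with
  | unit => exact isTy_tyUnit
  | ret ht => exact isTy_tyArrow ht (isTy_tyIO ht) (fun hu => absurd (lin_tyIO _) hu)
  | copen hT =>
    exact isTy_tyArrow (isTy_tyShared hT.1) (isTy_tyIO hT.1)
      (fun hu => absurd (lin_tyIO _) hu)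
  | send ht hT =>
    exact isTy_tyArrow (isTy_tyOut ht hT.1)
      (isTy_tyLolli ht (isTy_tyIO hT.1) (lin_tyIO _))
      (fun hu => absurd (lin_tyLolli _ _) hu)
  | recv ht hT =>
    exact isTy_tyArrow (isTy_tyInp ht hT.1) (isTy_tyIO (isTy_tyProd ht hT.1))
      (fun hu => absurd (lin_tyIO _) hu)
  | future ht =>
    exact isTy_tyArrow (isTy_tyDelayN _ (isTy_tyIO ht))
      (isTy_tyIO (isTy_tyDelayN _ ht))
      (fun hu => absurd (lin_tyIO _) hu)
  | bind ht hs =>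
    exact isTy_tyArrow (isTy_tyIO ht)
      (isTy_tyLolli (isTy_tyLolli ht (isTy_tyIO hs) (lin_tyIO _))
        (isTy_tyIO hs) (lin_tyIO _))
      (fun hu => absurd (lin_tyLolli _ _) hu)
  | pairLin ht hs hlin =>
    exact isTy_tyArrow ht
      (isTy_tyLolli hs (isTy_tyProd ht hs) (lin_tyProd_left _ hlin))
      (fun hu => absurd (lin_tyLolli _ _) hu)
  | pairUn ht hs hun =>
    exact isTy_tyArrow ht
      (isTy_tyArrow hs (isTy_tyProd ht hs)
        (fun hu hlins => hu (lin_tyProd_right _ hlins)))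
      (fun _ => hun)

end PreTy

open PreTy in
lemma HasTy.isTy {Γ : Env} {e : Expr} {t : PreTy} (h : HasTy Γ e t) : IsTy t := by
  induction h with
  | delayI _ ih => exact isTy_tyDelay ih
  | const _ hk => exact constTy_isTy hk
  | ax _ _ ht => exact ht
  | arrI _ _ ht _ _ => exact isTy_tyDelayN _ ht
  | arrE _ _ _ ih₁ _ =>
    have h1 : IsTy (tyArrow _ _) := ih₁.subtree (subtree_tyDelayN _ _)
    have h2 := h1.subtree (subtree_mk2_right _ (by simp [TyLabel.arity]) _ _)
    exact isTy_tyDelayN _ h2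
  | lolE _ _ _ ih₁ _ =>
    have h1 : IsTy (tyLolli _ _) := ih₁.subtree (subtree_tyDelayN _ _)
    have h2 := h1.subtree (subtree_mk2_right _ (by simp [TyLabel.arity]) _ _)
    exact isTy_tyDelayN _ h2
  | lolI _ ht _ _ => exact isTy_tyDelayN _ ht
  | prodE _ _ _ _ _ _ _ ih₂ => exact ih₂

end SID
namespace SID
namespace Env

lemma add_some_left {A B : Env} {u : Name} {t : PreTy} (h : A u = some t) :
    (A.add B) u = some t := by simp [add, h]

lemma add_eq_none {A B : Env} {u : Name} (h : (A.add B) u = none) :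
    A u = none ∧ B u = none := by
  cases hA : A u with
  | none => simpa [add, hA] using h
  | some a => simp [add, hA] at h

lemma add_assoc' (A B C : Env) : (A.add B).add C = A.add (B.add C) := by
  funext u
  cases hA : A u <;> simp [add, hA]

lemma add_add_swap {A B C : Env}
    (h : ∀ u b c, B u = some b → C u = some c → b = c) :
    (A.add B).add C = (A.add C).add B := by
  funext u
  cases hA : A u with
  | some a => simp [add, hA]
  | none =>
    cases hB : B u with
    | none => cases hC : C u <;> simp [add, hA, hB, hC]
    | some b =>
      cases hC : C u with
      | none => simp [add, hA, hB, hC]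
      | some c => simp [add, hA, hB, hC, h u b c hB hC]

lemma upd_add {A B : Env} {v : Name} {s : PreTy} (hB : B v = none) :
    (A.upd v s).add B = (A.add B).upd v s := by
  funext u
  by_cases hu : u = v
  · subst hu; simp [add, upd, hB]
  · simp [add, upd, hu]

lemma add_upd {A B : Env} {v : Name} {s : PreTy} (hA : A v = none) :
    A.add (B.upd v s) = (A.add B).upd v s := by
  funext u
  by_cases hu : u = v
  · subst hu; simp [add, upd, hA]
  · simp [add, upd, hu]

lemma Compat.symm {A B : Env} (h : Compat A B) : Compat B A := by
  intro u t₁ t₂ h1 h2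
  obtain ⟨heq, hun⟩ := h u t₂ t₁ h2 h1
  exact ⟨heq.symm, heq ▸ hun⟩

lemma Compat.of_add_left {A B C : Env} (h : Compat (A.add B) C) : Compat A C :=
  fun u t₁ t₂ h1 h2 => h u t₁ t₂ (add_some_left h1) h2

lemma add_some_of_right {A B : Env} (hAB : Compat A B) {u : Name} {t : PreTy}
    (h : B u = some t) : (A.add B) u = some t := by
  cases hA : A u with
  | none => simp [add, hA, h]
  | some a =>
    have := (hAB u a t hA h).1
    simp [add, hA, this]

lemma Compat.of_add_right {A B C : Env} (hAB : Compat A B) (h : Compat (A.add B) C) :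
    Compat B C :=
  fun u t₁ t₂ h1 h2 => h u t₁ t₂ (add_some_of_right hAB h1) h2

lemma Compat.add_left {A B C : Env} (hAC : Compat A C) (hBC : Compat B C) :
    Compat (A.add B) C := by
  intro u t₁ t₂ h1 h2
  cases hA : A u with
  | some a =>
    have hat : a = t₁ := by simpa [add, hA] using h1
    subst hat
    exact hAC u a t₂ hA h2
  | none =>
    have hB : B u = some t₁ := by simpa [add, hA] using h1
    exact hBC u t₁ t₂ hB h2

lemma Compat.upd_left {A B : Env} (h : Compat A B) {v : Name} {s : PreTy}
    (hB : B v = none) : Compat (A.upd v s) B := by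
  intro u t₁ t₂ h1 h2
  by_cases hu : u = v
  · subst hu; rw [hB] at h2; exact absurd h2 (by simp)
  · rw [upd, if_neg hu] at h1
    exact h u t₁ t₂ h1 h2

lemma Compat.upd_right {A B : Env} (h : Compat A B) {v : Name} {s : PreTy}
    (hA : A v = none) : Compat A (B.upd v s) :=
  (h.symm.upd_left hA).symm

@[simp] lemma upd_self (A : Env) (v : Name) (s : PreTy) : (A.upd v s) v = some s := by
  simp [upd]

end Env

open PreTy in
lemma HasTy.delayN {Γ : Env} {e : Expr} {t : PreTy} (m : ℕ) (h : HasTy Γ e t) :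
    HasTy Γ e (tyDelayN m t) := by
  induction m with
  | zero => exact h
  | succ m ih => rw [tyDelayN_succ]; exact ih.delayI

open PreTy in
lemma inv_app {Γ : Env} {e₁ e₂ : Expr} {r : PreTy}
    (h : HasTy Γ (.app e₁ e₂) r) :
    ∃ (m : ℕ) (Γa Γb : Env) (ta sa : PreTy) (n : ℕ),
      Env.Compat Γa Γb ∧ Γ = Γa.add Γb ∧ r = tyDelayN m (tyDelayN n sa) ∧
      (HasTy Γa e₁ (tyDelayN n (tyArrow ta sa)) ∨
        HasTy Γa e₁ (tyDelayN n (tyLolli ta sa))) ∧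
      HasTy Γb e₂ (tyDelayN n ta) := by
  suffices H : ∀ (Γ' : Env) (ex : Expr) (r' : PreTy), HasTy Γ' ex r' →
      ∀ e₁ e₂, ex = .app e₁ e₂ →
      ∃ (m : ℕ) (Γa Γb : Env) (ta sa : PreTy) (n : ℕ),
        Env.Compat Γa Γb ∧ Γ' = Γa.add Γb ∧ r' = tyDelayN m (tyDelayN n sa) ∧
        (HasTy Γa e₁ (tyDelayN n (tyArrow ta sa)) ∨
          HasTy Γa e₁ (tyDelayN n (tyLolli ta sa))) ∧
        HasTy Γb e₂ (tyDelayN n ta) by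
    exact H Γ _ r h e₁ e₂ rfl
  intro Γ' ex r' h
  induction h with
  | delayI _ ih =>
    intro e₁ e₂ heq
    obtain ⟨m, Γa, Γb, ta, sa, n, h1, h2, h3, h4, h5⟩ := ih e₁ e₂ heq
    exact ⟨m + 1, Γa, Γb, ta, sa, n, h1, h2, by rw [h3, tyDelayN_succ], h4, h5⟩
  | const _ _ => intro _ _ heq; exact absurd heq (by simp)
  | ax _ _ _ =>
    rename_i u _ _ _ _
    intro _ _ heq
    cases u <;> simp [Expr.ofName] at heq
  | arrI _ _ _ _ _ => intro _ _ heq; exact absurd heq (by simp)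
  | arrE hc h1 h2 _ _ =>
    intro e₁ e₂ heq
    obtain ⟨rfl, rfl⟩ : _ ∧ _ := by
      injection heq with a b
      exact ⟨a, b⟩
    exact ⟨0, _, _, _, _, _, hc, rfl, rfl, Or.inl h1, h2⟩
  | lolI _ _ _ _ => intro _ _ heq; exact absurd heq (by simp)
  | lolE hc h1 h2 _ _ =>
    intro e₁ e₂ heq
    obtain ⟨rfl, rfl⟩ : _ ∧ _ := by
      injection heq with a b
      exact ⟨a, b⟩
    exact ⟨0, _, _, _, _, _, hc, rfl, rfl, Or.inr h1, h2⟩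
  | prodE _ _ _ _ _ _ _ _ => intro _ _ heq; exact absurd heq (by simp)

open PreTy in
lemma inv_split {Γ : Env} {e : Expr} {x y : String} {g : Expr} {r : PreTy}
    (h : HasTy Γ (.split e x y g) r) :
    ∃ (m : ℕ) (Γa Γb : Env) (t₁ t₂ s : PreTy) (n : ℕ),
      Env.Compat Γa Γb ∧ Γ = Γa.add Γb ∧ r = tyDelayN m (tyDelayN n s) ∧
      x ≠ y ∧ Γb (.var x) = none ∧ Γb (.var y) = none ∧
      HasTy Γa e (tyDelayN n (tyProd t₁ t₂)) ∧
      HasTy ((Γb.upd (.var x) (tyDelayN n t₁)).upd (.var y) (tyDelayN n t₂)) g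
        (tyDelayN n s) := by
  suffices H : ∀ (Γ' : Env) (ex : Expr) (r' : PreTy), HasTy Γ' ex r' →
      ∀ e x y g, ex = .split e x y g →
      ∃ (m : ℕ) (Γa Γb : Env) (t₁ t₂ s : PreTy) (n : ℕ),
        Env.Compat Γa Γb ∧ Γ' = Γa.add Γb ∧ r' = tyDelayN m (tyDelayN n s) ∧
        x ≠ y ∧ Γb (.var x) = none ∧ Γb (.var y) = none ∧
        HasTy Γa e (tyDelayN n (tyProd t₁ t₂)) ∧
        HasTy ((Γb.upd (.var x) (tyDelayN n t₁)).upd (.var y) (tyDelayN n t₂)) g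
          (tyDelayN n s) by
    exact H Γ _ r h e x y g rfl
  intro Γ' ex r' h
  induction h with
  | delayI _ ih =>
    intro e x y g heq
    obtain ⟨m, Γa, Γb, t₁, t₂, s, n, h1, h2, h3, h4, h5, h6, h7, h8⟩ := ih e x y g heq
    exact ⟨m + 1, Γa, Γb, t₁, t₂, s, n, h1, h2, by rw [h3, tyDelayN_succ], h4, h5, h6, h7, h8⟩
  | const _ _ => intro _ _ _ _ heq; exact absurd heq (by simp)
  | ax _ _ _ =>
    rename_i u _ _ _ _
    intro _ _ _ _ heq
    cases u <;> simp [Expr.ofName] at heq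
  | arrI _ _ _ _ _ => intro _ _ _ _ heq; exact absurd heq (by simp)
  | arrE _ _ _ _ _ => intro _ _ _ _ heq; exact absurd heq (by simp)
  | lolI _ _ _ _ => intro _ _ _ _ heq; exact absurd heq (by simp)
  | lolE _ _ _ _ _ => intro _ _ _ _ heq; exact absurd heq (by simp)
  | prodE hc hxy hx hy h1 h2 _ _ =>
    intro e x y g heq
    obtain ⟨rfl, rfl, rfl, rfl⟩ : _ ∧ _ ∧ _ ∧ _ := by
      injection heq with a b c d
      exact ⟨a, b, c, d⟩
    exact ⟨0, _, _, _, _, _, _, hc, rfl, rfl, hxy, hx, hy, h1, h2⟩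

end SID
namespace SID

open PreTy in
theorem eval_ctx_aux {E : ECtx} {Γ : Env} {e : Expr} {t : PreTy}
    (h : HasTy Γ (E.fill e) t) :
    ∃ (Γ₁ Γ₂ : Env) (s : PreTy), Env.Compat Γ₁ Γ₂ ∧ Γ = Γ₁.add Γ₂ ∧
      HasTy Γ₂ e s ∧
      ∀ x : String, Γ (.var x) = none →
        HasTy (Γ₁.upd (.var x) s) (E.fill (.var x)) t := by
  induction E generalizing Γ t with
  | hole =>
    refine ⟨fun _ => none, Γ, t, ?_, rfl, h, ?_⟩
    · intro u t₁ t₂ h1 _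
      simp at h1
    · intro x _
      refine HasTy.ax (u := .var x) ?_ (by simp) h.isTy
      intro v s hv hsome
      rw [Env.upd, if_neg hv] at hsome
      simp at hsome
  | appL E' f ih =>
    simp only [ECtx.fill] at h ⊢
    obtain ⟨m, Γa, Γb, ta, sa, n, hc, rfl, rfl, hor, hf⟩ := inv_app h
    rcases hor with h1 | h1
    · obtain ⟨Γ₁', Γ₂, s', hc', rfl, he, hvar⟩ := ih h1
      have hbc : Env.Compat Γ₂ Γb := Env.Compat.of_add_right hc' hc
      refine ⟨Γ₁'.add Γb, Γ₂, s', Env.Compat.add_left hc' hbc.symm, ?_, he, ?_⟩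
      · exact Env.add_add_swap fun u b c h2 h3 =>
          (hc u b c (Env.add_some_of_right hc' h2) h3).1
      · intro x hx
        obtain ⟨hab, hb⟩ := Env.add_eq_none hx
        have hx' := hvar x hab
        have hfin := HasTy.arrE ((hc.of_add_left).upd_left hb) hx' hf
        rw [Env.upd_add hb] at hfin
        exact hfin.delayN m
    · obtain ⟨Γ₁', Γ₂, s', hc', rfl, he, hvar⟩ := ih h1
      have hbc : Env.Compat Γ₂ Γb := Env.Compat.of_add_right hc' hc
      refine ⟨Γ₁'.add Γb, Γ₂, s', Env.Compat.add_left hc' hbc.symm, ?_, he, ?_⟩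
      · exact Env.add_add_swap fun u b c h2 h3 =>
          (hc u b c (Env.add_some_of_right hc' h2) h3).1
      · intro x hx
        obtain ⟨hab, hb⟩ := Env.add_eq_none hx
        have hx' := hvar x hab
        have hfin := HasTy.lolE ((hc.of_add_left).upd_left hb) hx' hf
        rw [Env.upd_add hb] at hfin
        exact hfin.delayN m
  | splitC E' x' y' g ih =>
    simp only [ECtx.fill] at h ⊢
    obtain ⟨m, Γa, Γb, t₁, t₂, s, n, hc, rfl, rfl, hxy, hxn, hyn, h1, h2⟩ := inv_split h
    obtain ⟨Γ₁', Γ₂, s', hc', rfl, he, hvar⟩ := ih h1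
    have hbc : Env.Compat Γ₂ Γb := Env.Compat.of_add_right hc' hc
    refine ⟨Γ₁'.add Γb, Γ₂, s', Env.Compat.add_left hc' hbc.symm, ?_, he, ?_⟩
    · exact Env.add_add_swap fun u b c h2' h3 =>
        (hc u b c (Env.add_some_of_right hc' h2') h3).1
    · intro x hx
      obtain ⟨hab, hb⟩ := Env.add_eq_none hx
      have hx' := hvar x hab
      have hfin := HasTy.prodE ((hc.of_add_left).upd_left hb) hxy hxn hyn hx' h2
      rw [Env.upd_add hb] at hfin
      exact hfin.delayN m
  | openC E' ih | sendC E' ih | recvC E' ih | bindC E' ih =>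
    simp only [ECtx.fill] at h ⊢
    obtain ⟨m, Γa, Γb, ta, sa, n, hc, rfl, rfl, hor, hf⟩ := inv_app h
    obtain ⟨Γ₁', Γ₂, s', hc', rfl, he, hvar⟩ := ih hf
    have haΓ₁ : Env.Compat Γa Γ₁' := fun u u₁ u₂ hga hg1 =>
      hc u u₁ u₂ hga (Env.add_some_left hg1)
    have haΓ₂ : Env.Compat Γa Γ₂ := fun u u₁ u₂ hga hg2 =>
      hc u u₁ u₂ hga (Env.add_some_of_right hc' hg2)
    refine ⟨Γa.add Γ₁', Γ₂, s', Env.Compat.add_left haΓ₂ hc', (Env.add_assoc' _ _ _).symm,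
      he, ?_⟩
    intro x hx
    obtain ⟨ha, hb⟩ := Env.add_eq_none hx
    have hx' := hvar x hb
    rcases hor with h1 | h1
    · have hfin := HasTy.arrE (haΓ₁.upd_right ha) h1 hx'
      rw [Env.add_upd ha] at hfin
      exact hfin.delayN m
    · have hfin := HasTy.lolE (haΓ₁.upd_right ha) h1 hx'
      rw [Env.add_upd ha] at hfin
      exact hfin.delayN m

end SID

namespace SID

/-- **Lemma 4.5 (Evaluation Contexts for Expressions).**
If `Γ ⊢ E[e] : t`, then `Γ = Γ₁ + Γ₂` and `Γ₁, x : s ⊢ E[x] : t` and `Γ₂ ⊢ e : s`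
for some `s` (and any fresh variable `x`). -/
theorem evaluation_contexts_lemma {Γ : Env} {E : ECtx} {e : Expr} {t : PreTy}
    (h : HasTy Γ (E.fill e) t) :
    ∃ (Γ₁ Γ₂ : Env) (s : PreTy), Env.Compat Γ₁ Γ₂ ∧ Γ = Γ₁.add Γ₂ ∧
      HasTy Γ₂ e s ∧
      ∀ x : String, Γ (.var x) = none → x ∉ (E.fill (.const .unit)).fv →
        HasTy (Γ₁.upd (.var x) s) (E.fill (.var x)) t := by
  obtain ⟨Γ₁, Γ₂, s, hc, heq, he, hvar⟩ := eval_ctx_aux h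
  exact ⟨Γ₁, Γ₂, s, hc, heq, he, fun x hx _ => hvar x hx⟩

end SID
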